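/- arXiv:2604.05246 — 3 statements merged into one kernel-verified Lean document; each statement's English description precedes it below -/
import Mathlib

section
/- Transitivity of lifted preorders: if R : A → A → Prop is transitive and the R-lifting holds between (a, p) and (b, q) and between (b, q) and (c, r), then the R-lifting holds between (a, p) and (c, r). -/
/-!
Glue the two couplings along the middle marginal: `E i k = ∑ j, C i j * D j k / q j` is a
coupling of `p` and `r`, because row `j` of `D` and column `j` of `C` both have mass `q j`.
A positive entry `E i k` needs some `j` with `C i j > 0` and `D j k > 0`, so `R (a i) (c k)`
follows from transitivity through `b j`.
-/

open scoped NNReal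
open Finset

section Coupling

variable {I J K : Type*} [Fintype J]

def IsCoupling [Fintype I] (p : I → ℝ≥0) (q : J → ℝ≥0) (C : I → J → ℝ≥0) : Prop :=
  (∀ i, ∑ j, C i j = p i) ∧ (∀ j, ∑ i, C i j = q j)

/-- Since `x / 0 = 0`, the sum effectively runs over the `j` with `q j > 0` only. -/
noncomputable def couplingComp (C : I → J → ℝ≥0) (D : J → K → ℝ≥0) (q : J → ℝ≥0) :
    I → K → ℝ≥0 :=
  fun i k => ∑ j, C i j * D j k / q j

variable {C : I → J → ℝ≥0} {D : J → K → ℝ≥0} {q : J → ℝ≥0}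

section Marginals

variable [Fintype I] [Fintype K]

theorem sum_couplingComp_right (hC : ∀ j, ∑ i, C i j = q j) (hD : ∀ j, ∑ k, D j k = q j)
    (i : I) : ∑ k, couplingComp C D q i k = ∑ j, C i j := by
  simp only [couplingComp]
  rw [sum_comm]
  refine sum_congr rfl fun j _ => ?_
  rw [← sum_div, ← mul_sum, hD j]
  exact mul_div_cancel_of_imp fun hq => sum_eq_zero_iff.mp ((hC j).trans hq) i (mem_univ i)

theorem sum_couplingComp_left (hC : ∀ j, ∑ i, C i j = q j) (hD : ∀ j, ∑ k, D j k = q j)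
    (k : K) : ∑ i, couplingComp C D q i k = ∑ j, D j k := by
  simp only [couplingComp]
  rw [sum_comm]
  refine sum_congr rfl fun j _ => ?_
  rw [← sum_div, ← sum_mul, hC j]
  exact mul_div_cancel_left_of_imp fun hq => sum_eq_zero_iff.mp ((hD j).trans hq) k (mem_univ k)

theorem IsCoupling.comp {p : I → ℝ≥0} {r : K → ℝ≥0} (hC : IsCoupling p q C)
    (hD : IsCoupling q r D) : IsCoupling p r (couplingComp C D q) :=
  ⟨fun i => (sum_couplingComp_right hC.2 hD.1 i).trans (hC.1 i),
    fun k => (sum_couplingComp_left hC.2 hD.1 k).trans (hD.2 k)⟩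

end Marginals

theorem exists_pos_of_couplingComp_pos {i : I} {k : K} (h : 0 < couplingComp C D q i k) :
    ∃ j, 0 < C i j ∧ 0 < D j k := by
  obtain ⟨j, -, hj⟩ := sum_pos_iff.mp h
  obtain ⟨hCij, hDjk⟩ := mul_ne_zero_iff.mp (div_ne_zero_iff.mp hj.ne').1
  exact ⟨j, pos_iff_ne_zero.mpr hCij, pos_iff_ne_zero.mpr hDjk⟩

end Coupling

theorem lifting_trans {I J K : Type*} [Fintype I] [Fintype J] [Fintype K]
    {A : Type*} (R : A → A → Prop) (hR : Transitive R)
    (a : I → A) (b : J → A) (c : K → A)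
    (p : I → ℝ≥0) (q : J → ℝ≥0) (r : K → ℝ≥0)
    (h₁ : ∃ C : I → J → ℝ≥0,
      (∀ i, ∑ j, C i j = p i) ∧ (∀ j, ∑ i, C i j = q j) ∧
      (∀ i j, 0 < C i j → R (a i) (b j)))
    (h₂ : ∃ D : J → K → ℝ≥0,
      (∀ j, ∑ k, D j k = q j) ∧ (∀ k, ∑ j, D j k = r k) ∧
      (∀ j k, 0 < D j k → R (b j) (c k))) :
    ∃ E : I → K → ℝ≥0,
      (∀ i, ∑ k, E i k = p i) ∧ (∀ k, ∑ i, E i k = r k) ∧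
      (∀ i k, 0 < E i k → R (a i) (c k)) := by
  obtain ⟨C, hCrow, hCcol, hCR⟩ := h₁
  obtain ⟨D, hDrow, hDcol, hDR⟩ := h₂
  obtain ⟨hErow, hEcol⟩ := IsCoupling.comp ⟨hCrow, hCcol⟩ ⟨hDrow, hDcol⟩
  refine ⟨couplingComp C D q, hErow, hEcol, fun i k hE => ?_⟩
  obtain ⟨j, hCij, hDjk⟩ := exists_pos_of_couplingComp_pos hE
  exact hR (hCR i j hCij) (hDR j k hDjk)
end

section
/- Weighted-mixture lemma (soundness of the probabilistic let rule): let c : L → K → ℝ≥0 be a coupling between outer weights (p : L → ℝ≥0) and (q : K → ℝ≥0). Suppose for each pair (l, k) with c l k > 0 there is a coupling D^{lk} : I → J → ℝ≥0 witnessing the R-lifting between inner families (a_l : I → A, v_l : I → ℝ≥0) and (b_k : J → B, w_k : J → ℝ≥0). Suppose also that each inner family v_l sums to 1 and each w_k sums to 1. Then the matrix E ((l,i),(k,j)) := c l k * D^{lk} i j (and 0 when c l k = 0) is a coupling between the mixture families ((l,i) ↦ p l * v_l i) and ((k,j) ↦ q k * w_k j), and it witnesses the R-lifting between the mixtures (with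 labels (l,i) ↦ a_l i and (k,j) ↦ b_k j). -/
open scoped NNReal

theorem lifting_weighted_mixture
    {L K I J : Type*} [Fintype L] [Fintype K] [Fintype I] [Fintype J]
    {A B : Type*} (R : A → B → Prop)
    (p : L → ℝ≥0) (q : K → ℝ≥0) (c : L → K → ℝ≥0)
    (hcrow : ∀ l, ∑ k, c l k = p l) (hccol : ∀ k, ∑ l, c l k = q k)
    (a : L → I → A) (v : L → I → ℝ≥0) (hv : ∀ l, ∑ i, v l i = 1)
    (b : K → J → B) (w : K → J → ℝ≥0) (hw : ∀ k, ∑ j, w k j = 1)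
    (D : L → K → I → J → ℝ≥0)
    (hD : ∀ l k, 0 < c l k →
      (∀ i, ∑ j, D l k i j = v l i) ∧ (∀ j, ∑ i, D l k i j = w k j) ∧
      (∀ i j, 0 < D l k i j → R (a l i) (b k j))) :
    (∀ li : L × I, ∑ kj : K × J, c li.1 kj.1 * D li.1 kj.1 li.2 kj.2 = p li.1 * v li.1 li.2) ∧
    (∀ kj : K × J, ∑ li : L × I, c li.1 kj.1 * D li.1 kj.1 li.2 kj.2 = q kj.1 * w kj.1 kj.2) ∧
    (∀ (li : L × I) (kj : K × J), 0 < c li.1 kj.1 * D li.1 kj.1 li.2 kj.2 →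
      R (a li.1 li.2) (b kj.1 kj.2)) := by
  refine ⟨fun ⟨l, i⟩ => ?_, fun ⟨k, j⟩ => ?_, fun ⟨l, i⟩ ⟨k, j⟩ h => ?_⟩
  · rw [Fintype.sum_prod_type, ← hcrow l, Finset.sum_mul]
    refine Finset.sum_congr rfl fun k _ => ?_
    rcases eq_or_lt_of_le (zero_le : 0 ≤ c l k) with h | h
    · simp [← h]
    · simp only [← Finset.mul_sum]
      exact congrArg _ ((hD l k h).1 i)
  · rw [Fintype.sum_prod_type, ← hccol k, Finset.sum_mul]
    refine Finset.sum_congr rfl fun l _ => ?_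
    rcases eq_or_lt_of_le (zero_le : 0 ≤ c l k) with h | h
    · simp [← h]
    · simp only [mul_comm (c l k), ← Finset.sum_mul]
      rw [(hD l k h).2.1 j, mul_comm]
  · obtain ⟨hc, hd⟩ | ⟨hc, _⟩ := mul_pos_iff.mp h
    swap
    · exact absurd hc (not_lt.2 zero_le)
    exact (hD l k hc).2.2 i j hd
end

section
/- Strassen's theorem for finite distributions: assume ∑_i p i = ∑_j q j = 1. Then there exists a coupling C between p and q witnessing the R-lifting between (a : I → A, p) and (b : J → B, q) if and only if for every subset S of I, ∑_{i ∈ S} p i ≤ ∑_{j ∈ R[S]} q j, where R[S] = { j | ∃ i ∈ S, R (a i) (b j) }. -/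
/-!
Hall's marriage theorem, applied to `m i` copies of each `i` and `k j` copies of each `j`, gives
the theorem for integer weights. For real weights, scale by `N`, round the rows down and the
columns up (this keeps Hall's condition) and shrink the columns back below `q`: the result is a
sub-coupling of mass at least `∑ p - (#I + #J) / N`. A sub-coupling of maximal mass, which
exists by compactness, therefore has mass `∑ p = ∑ q`, so all its marginal inequalities are
equalities.
-/

open scoped NNReal
open Finset Filter

section
open Classical

variable {I J : Type*} [Fintype J] {r : I → J → Prop}

def HallCondition {M : Type*} [AddCommMonoid M] [LE M] (r : I → J → Prop) (p : I → M)
    (q : J → M) : Prop :=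
  ∀ S : Finset I, ∑ i ∈ S, p i ≤ ∑ j ∈ univ.filter (fun j => ∃ i ∈ S, r i j), q j

theorem HallCondition.of_transport [Fintype I] {M : Type*} [AddCommMonoid M] [PartialOrder M]
    [IsOrderedAddMonoid M] [CanonicallyOrderedAdd M] {p : I → M} {q : J → M} (C : I → J → M)
    (hrow : ∀ i, ∑ j, C i j = p i) (hcol : ∀ j, ∑ i, C i j ≤ q j)
    (hsupp : ∀ i j, 0 < C i j → r i j) :
    HallCondition r p q := by
  intro S
  calc ∑ i ∈ S, p i = ∑ j, ∑ i ∈ S, C i j := by simp_rw [← hrow]; exact sum_comm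
    _ = ∑ j ∈ univ.filter (fun j => ∃ i ∈ S, r i j), ∑ i ∈ S, C i j := by
        refine (sum_filter_of_ne fun j _ hj => ?_).symm
        obtain ⟨i, hi, hCij⟩ := exists_ne_zero_of_sum_ne_zero hj
        exact ⟨i, hi, hsupp i j (pos_iff_ne_zero.2 hCij)⟩
    _ ≤ _ := sum_le_sum fun j _ => (sum_le_sum_of_subset (subset_univ S)).trans (hcol j)

theorem card_filter_sigma_fst_eq {ι : Type*} [Fintype ι] [DecidableEq ι] (m : ι → ℕ)
    (i : ι) :
    #{x : (Σ i, Fin (m i)) | x.1 = i} = m i := by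
  have : ({x : (Σ i, Fin (m i)) | x.1 = i} : Finset _) =
      ({i} : Finset ι).sigma fun _ => univ := by
    ext; simp
  simp [this]

theorem HallCondition.exists_injective_sigma {m : I → ℕ} {k : J → ℕ}
    (h : HallCondition r m k) :
    ∃ f : (Σ i, Fin (m i)) → (Σ j, Fin (k j)), f.Injective ∧ ∀ x, r x.1 (f x).1 := by
  refine (Fintype.all_card_le_filter_rel_iff_exists_injective
    fun (x : Σ i, Fin (m i)) (y : Σ j, Fin (k j)) => r x.1 y.1).1 fun s => ?_
  set S := s.image Sigma.fst
  calc #s ≤ #(S.sigma fun i => univ) :=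
        card_le_card fun x hx => mem_sigma.2 ⟨mem_image_of_mem _ hx, mem_univ _⟩
    _ = ∑ i ∈ S, m i := by simp
    _ ≤ ∑ j ∈ univ.filter (fun j => ∃ i ∈ S, r i j), k j := h S
    _ = #((univ.filter fun j => ∃ i ∈ S, r i j).sigma fun j => univ) := by simp
    _ ≤ #{y | ∃ x ∈ s, r x.1 y.1} := card_le_card fun y hy => by
        obtain ⟨i, hi, hr⟩ := (mem_filter.1 (mem_sigma.1 hy).1).2
        obtain ⟨x, hx, rfl⟩ := mem_image.1 hi
        exact mem_filter.2 ⟨mem_univ _, x, hx, hr⟩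

theorem HallCondition.exists_nat_transport [Fintype I] {m : I → ℕ} {k : J → ℕ}
    (h : HallCondition r m k) :
    ∃ c : I → J → ℕ, (∀ i, ∑ j, c i j = m i) ∧ (∀ j, ∑ i, c i j ≤ k j) ∧
      ∀ i j, 0 < c i j → r i j := by
  obtain ⟨f, hf, hfr⟩ := h.exists_injective_sigma
  refine ⟨fun i j => #{x | x.1 = i ∧ (f x).1 = j}, fun i => ?_, fun j => ?_,
    fun i j hij => ?_⟩
  · rw [← card_filter_sigma_fst_eq m i,
      card_eq_sum_card_fiberwise (f := fun x => (f x).1) (t := univ) fun _ _ => mem_univ _]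
    simp only [filter_filter]
  · calc ∑ i, #{x | x.1 = i ∧ (f x).1 = j} = #{x | (f x).1 = j} := by
          rw [card_eq_sum_card_fiberwise (f := fun x => x.1) (t := univ) fun _ _ => mem_univ _]
          simp only [filter_filter, and_comm]
      _ ≤ #{y : Σ j, Fin (k j) | y.1 = j} :=
          card_le_card_of_injOn f (fun x hx => by simpa using hx) hf.injOn
      _ = k j := card_filter_sigma_fst_eq k j
  · obtain ⟨x, hx⟩ := card_pos.1 hij
    obtain ⟨rfl, rfl⟩ := (mem_filter.1 hx).2
    exact hfr x

theorem HallCondition.floor_mul_ceil_mul {p : I → ℝ≥0} {q : J → ℝ≥0}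
    (h : HallCondition r p q) (N : ℝ≥0) :
    HallCondition r (fun i => ⌊N * p i⌋₊) (fun j => ⌈N * q j⌉₊) := by
  intro S
  rw [← Nat.cast_le (α := ℝ≥0)]
  push_cast
  calc ∑ i ∈ S, (⌊N * p i⌋₊ : ℝ≥0) ≤ ∑ i ∈ S, N * p i :=
        sum_le_sum fun i _ => Nat.floor_le zero_le
    _ = N * ∑ i ∈ S, p i := (mul_sum ..).symm
    _ ≤ N * ∑ j ∈ univ.filter (fun j => ∃ i ∈ S, r i j), q j := by gcongr; exact h S
    _ = ∑ j ∈ univ.filter (fun j => ∃ i ∈ S, r i j), N * q j := mul_sum ..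
    _ ≤ _ := sum_le_sum fun j _ => Nat.le_ceil _

theorem NNReal.exists_le_sum_eq_min {ι : Type*} [Fintype ι] (v : ι → ℝ≥0) (t : ℝ≥0) :
    ∃ w ≤ v, ∑ i, w i = min (∑ i, v i) t := by
  rcases le_or_gt (∑ i, v i) t with h | h
  · exact ⟨v, le_rfl, (min_eq_left h).symm⟩
  · refine ⟨fun i => t / (∑ i, v i) * v i, fun i => ?_, ?_⟩
    · exact mul_le_of_le_one_left zero_le (div_le_one_of_le₀ h.le zero_le)
    · rw [← mul_sum, div_mul_cancel₀ _ (pos_of_gt h).ne', min_eq_right h.le]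

def subcouplings [Fintype I] (r : I → J → Prop) (p : I → ℝ≥0) (q : J → ℝ≥0) :
    Set (I → J → ℝ≥0) :=
  {C | (∀ i j, 0 < C i j → r i j) ∧ (∀ i, ∑ j, C i j ≤ p i) ∧ ∀ j, ∑ i, C i j ≤ q j}

theorem isCompact_subcouplings [Fintype I] (r : I → J → Prop) (p : I → ℝ≥0)
    (q : J → ℝ≥0) : IsCompact (subcouplings r p q) := by
  refine isCompact_Icc.of_isClosed_subset ?_ (fun C hC => ⟨zero_le, fun i j => ?_⟩ :
    subcouplings r p q ⊆ Set.Icc 0 fun i _ => p i)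
  · simp only [subcouplings, Set.ofPred_and, Set.ofPred_forall]
    refine .inter (isClosed_iInter fun i => isClosed_iInter fun j => ?_) (.inter
      (isClosed_iInter fun i => isClosed_le (by fun_prop) continuous_const)
      (isClosed_iInter fun j => isClosed_le (by fun_prop) continuous_const))
    by_cases hr : r i j
    · simp [hr]
    · simpa [hr] using isClosed_eq (by fun_prop) continuous_const
  · exact (single_le_sum (fun _ _ => zero_le) (mem_univ j)).trans (hC.2.1 i)

theorem HallCondition.exists_approx_transport [Fintype I] {p : I → ℝ≥0}
    {q : J → ℝ≥0} (h : HallCondition r p q) {N : ℕ} (hN : 0 < N) :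
    ∃ C : I → J → ℝ≥0, (∀ i j, 0 < C i j → r i j) ∧ (∀ i, ∑ j, C i j ≤ p i) ∧
      (∀ j, ∑ i, C i j ≤ q j + 1 / N) ∧
      ∑ i, p i ≤ ∑ i, ∑ j, C i j + Fintype.card I / N := by
  obtain ⟨c, hrow, hcol, hsupp⟩ := (h.floor_mul_ceil_mul N).exists_nat_transport
  have hN' : (N : ℝ≥0) ≠ 0 := by positivity
  have hrow' (i : I) : ∑ j, (c i j : ℝ≥0) / N = ⌊N * p i⌋₊ / N := by
    rw [← sum_div, ← Nat.cast_sum, hrow]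
  refine ⟨fun i j => c i j / N, fun i j hij => hsupp i j ?_, fun i => ?_, fun j => ?_, ?_⟩
  · exact Nat.pos_of_ne_zero fun h0 => by simp [h0] at hij
  · rw [hrow', div_le_iff₀ (by positivity), mul_comm]
    exact Nat.floor_le zero_le
  · calc ∑ i, (c i j : ℝ≥0) / N = ((∑ i, c i j : ℕ) : ℝ≥0) / N := by
          push_cast; rw [sum_div]
      _ ≤ ⌈N * q j⌉₊ / N := by gcongr; exact hcol j
      _ ≤ (N * q j + 1) / N := by gcongr; exact (Nat.ceil_lt_add_one zero_le).le
      _ = q j + 1 / N := by rw [add_div, mul_div_cancel_left₀ _ hN']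
  · calc ∑ i, p i = ∑ i, N * p i / N := by simp only [mul_div_cancel_left₀ _ hN']
      _ ≤ ∑ i, ((⌊N * p i⌋₊ : ℝ≥0) + 1) / N := by
          gcongr; exact (Nat.lt_floor_add_one _).le
      _ = ∑ i, ∑ j, (c i j : ℝ≥0) / N + Fintype.card I / N := by
          simp only [hrow', add_div, sum_add_distrib, sum_const, card_univ, nsmul_eq_mul,
            mul_one_div]

theorem exists_mem_subcouplings_of_sum_le_add [Fintype I] {p : I → ℝ≥0}
    {q : J → ℝ≥0} {C : I → J → ℝ≥0} {ε : ℝ≥0} (hsupp : ∀ i j, 0 < C i j → r i j)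
    (hrow : ∀ i, ∑ j, C i j ≤ p i) (hcol : ∀ j, ∑ i, C i j ≤ q j + ε) :
    ∃ D ∈ subcouplings r p q, ∑ i, ∑ j, C i j ≤ ∑ i, ∑ j, D i j + Fintype.card J * ε := by
  choose w hwC hw using fun j => NNReal.exists_le_sum_eq_min (fun i => C i j) (q j)
  refine ⟨fun i j => w j i, ⟨fun i j hij => hsupp i j (hij.trans_le (hwC j i)),
    fun i => (sum_le_sum fun j _ => hwC j i).trans (hrow i),
    fun j => (hw j).trans_le (min_le_right _ _)⟩, ?_⟩
  rw [sum_comm, sum_comm (f := fun i j => w j i)]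
  calc ∑ j, ∑ i, C i j ≤ ∑ j, (∑ i, w j i + ε) := sum_le_sum fun j _ => by
        rw [hw j, ← min_add_add_right]
        exact le_min le_self_add (hcol j)
    _ = ∑ j, ∑ i, w j i + Fintype.card J * ε := by simp [sum_add_distrib]

theorem HallCondition.exists_mem_subcouplings [Fintype I] {p : I → ℝ≥0}
    {q : J → ℝ≥0} (h : HallCondition r p q) {N : ℕ} (hN : 0 < N) :
    ∃ D ∈ subcouplings r p q,
      ∑ i, p i ≤ ∑ i, ∑ j, D i j + (Fintype.card I + Fintype.card J) / N := by
  obtain ⟨C, hsupp, hrow, hcol, hmass⟩ := h.exists_approx_transport hN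
  obtain ⟨D, hD, hCD⟩ := exists_mem_subcouplings_of_sum_le_add hsupp hrow hcol
  refine ⟨D, hD, ?_⟩
  calc ∑ i, p i ≤ ∑ i, ∑ j, C i j + Fintype.card I / N := hmass
    _ ≤ ∑ i, ∑ j, D i j + Fintype.card J * (1 / N) + Fintype.card I / N := by gcongr
    _ = _ := by ring

theorem HallCondition.exists_coupling [Fintype I] {p : I → ℝ≥0}
    {q : J → ℝ≥0} (h : HallCondition r p q) (hpq : ∑ i, p i = ∑ j, q j) :
    ∃ C : I → J → ℝ≥0, (∀ i, ∑ j, C i j = p i) ∧ (∀ j, ∑ i, C i j = q j) ∧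
      ∀ i j, 0 < C i j → r i j := by
  obtain ⟨C, ⟨hsupp, hrow, hcol⟩, hmax⟩ := (isCompact_subcouplings r p q).exists_isMaxOn
    ⟨0, by simp [subcouplings]⟩
    (by fun_prop : Continuous fun C : I → J → ℝ≥0 => ∑ i, ∑ j, C i j).continuousOn
  have hmass : ∑ i, ∑ j, C i j = ∑ i, p i := by
    have hlim := (tendsto_const_div_atTop_nhds_zero_nat
      (Fintype.card I + Fintype.card J : ℝ≥0)).const_add (∑ i, ∑ j, C i j)
    rw [add_zero] at hlim
    refine le_antisymm (sum_le_sum fun i _ => hrow i) (ge_of_tendsto hlim ?_)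
    filter_upwards [eventually_gt_atTop 0] with N hN
    obtain ⟨D, hD, hpD⟩ := h.exists_mem_subcouplings hN
    exact hpD.trans (by gcongr ?_ + _; exact hmax hD)
  refine ⟨C, fun i => ?_, fun j => ?_, hsupp⟩
  · exact (sum_eq_sum_iff_of_le fun i _ => hrow i).1 hmass i (mem_univ i)
  · exact (sum_eq_sum_iff_of_le fun j _ => hcol j).1 (by rw [sum_comm, hmass, hpq]) j
      (mem_univ j)

end

open Classical in
theorem strassen {I J : Type*} [Fintype I] [Fintype J] {A B : Type*}
    (R : A → B → Prop) (a : I → A) (b : J → B)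
    (p : I → ℝ≥0) (q : J → ℝ≥0)
    (hp : ∑ i, p i = 1) (hq : ∑ j, q j = 1) :
    (∃ C : I → J → ℝ≥0,
      (∀ i, ∑ j, C i j = p i) ∧ (∀ j, ∑ i, C i j = q j) ∧
      (∀ i j, 0 < C i j → R (a i) (b j))) ↔
    (∀ S : Finset I, ∑ i ∈ S, p i ≤
      ∑ j ∈ Finset.univ.filter (fun j => ∃ i ∈ S, R (a i) (b j)), q j) :=
  ⟨fun ⟨C, hrow, hcol, hsupp⟩ =>
    HallCondition.of_transport C hrow (fun j => (hcol j).le) hsupp,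
    fun hall => HallCondition.exists_coupling hall (hp.trans hq.symm)⟩
end
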